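/- Let X be a locally compact Hausdorff space, A = (A_i)_{i∈I} a locally finite family of closed sets, ψ : X → (−∞,∞] lower semicontinuous (ψ ≥ 0 if X noncompact), and μ = (μ^i) a vector measure with μ^i positive Radon concentrated on A_i, such that Rμ := Σ_i α_i μ^i is a well-defined signed Radon measure. Then ∫ψ d(Rμ) is finite if and only if Σ_i |∫ψ dμ^i| < ∞, and in that case ∫ψ d(Rμ) = Σ_i α_i ∫ψ dμ^i. -/
import Mathlib


open MeasureTheory Filter Topology
open scoped ENNReal

variable {X : Type*} [TopologicalSpace X] [MeasurableSpace X] [BorelSpace X]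

/-- The positive part `(Rμ)⁺ = Σ_{i ∈ I⁺} μ^i`. -/
noncomputable def Rpos {I : Type*} (sgn : I → Bool) (μ : I → Measure X) :
    Measure X := Measure.sum fun i : {i : I // sgn i = true} => μ i

/-- The negative part `(Rμ)⁻ = Σ_{i ∈ I⁻} μ^i`. -/
noncomputable def Rneg {I : Type*} (sgn : I → Bool) (μ : I → Measure X) :
    Measure X := Measure.sum fun i : {i : I // sgn i = false} => μ i


lemma tsum_subtype_congr {α : Type*} {M : Type*} [AddCommMonoid M] [TopologicalSpace M]
    {p q : α → Prop} (e : ∀ x, p x ↔ q x) (f : α → M) :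
    (∑' i : {x // p x}, f i) = ∑' i : {x // q x}, f i := by
  rw [← (Equiv.subtypeEquivRight e).tsum_eq (fun i : {x // q x} => f i)]
  exact tsum_congr fun c => by rw [Equiv.subtypeEquivRight_apply]

/-- Let `X` be a (noncompact) locally compact Hausdorff space,
`A = (A_i)_{i∈I}` a locally finite family of closed sets with signs
`α_i = ±1`, `ψ : X → [0,∞]` lower semicontinuous (nonnegative since `X` is
noncompact), and `μ = (μ^i)` a vector measure with `μ^i` positive Radon
concentrated on `A_i`, so that `Rμ = Σ α_i μ^i` is a well-defined signed Radon
measure with Hahn–Jordan parts `(Rμ)⁺ = Σ_{i∈I⁺} μ^i`, `(Rμ)⁻ = Σ_{i∈I⁻} μ^i`.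
Then `∫ ψ d(Rμ)` is finite iff `Σ_i |∫ ψ dμ^i| < ∞` (every `∫ ψ dμ^i` is finite
and the series converges), and in that case
`∫ ψ d(Rμ) = Σ_i α_i ∫ ψ dμ^i`. -/
theorem stmt18 [T2Space X] [LocallyCompactSpace X] (hX : ¬ CompactSpace X)
    {I : Type*} [Countable I]
    (A : I → Set X) (sgn : I → Bool)
    (hA : ∀ i, IsClosed (A i))
    (hlocfin : ∀ K : Set X, IsCompact K → {i : I | (A i ∩ K).Nonempty}.Finite)
    (hdisj : ∀ i j, sgn i ≠ sgn j → Disjoint (A i) (A j))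
    (ψ : X → ℝ≥0∞) (hψ : LowerSemicontinuous ψ)
    (μ : I → Measure X) (hconc : ∀ i, μ i (A i)ᶜ = 0) :
    (((∫⁻ x, ψ x ∂(Rpos sgn μ)) < ⊤ ∧ (∫⁻ x, ψ x ∂(Rneg sgn μ)) < ⊤) ↔
      ((∀ i, (∫⁻ x, ψ x ∂(μ i)) < ⊤) ∧
        Summable fun i => (∫⁻ x, ψ x ∂(μ i)).toReal)) ∧
    (((∀ i, (∫⁻ x, ψ x ∂(μ i)) < ⊤) ∧
        Summable fun i => (∫⁻ x, ψ x ∂(μ i)).toReal) →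
      (∫⁻ x, ψ x ∂(Rpos sgn μ)).toReal - (∫⁻ x, ψ x ∂(Rneg sgn μ)).toReal =
        ∑' i : I, (if sgn i then (1 : ℝ) else -1) * (∫⁻ x, ψ x ∂(μ i)).toReal) := by
  classical
  have hpos : (∫⁻ x, ψ x ∂(Rpos sgn μ)) = ∑' i : {i : I // sgn i = true}, ∫⁻ x, ψ x ∂(μ i) := by
    simp [Rpos, lintegral_sum_measure]
  have hneg : (∫⁻ x, ψ x ∂(Rneg sgn μ)) = ∑' i : {i : I // sgn i = false}, ∫⁻ x, ψ x ∂(μ i) := by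
    simp [Rneg, lintegral_sum_measure]
  have hsplit : (∑' i : {i : I // sgn i = true}, ∫⁻ x, ψ x ∂(μ i))
      + (∑' i : {i : I // sgn i = false}, ∫⁻ x, ψ x ∂(μ i))
      = ∑' i : I, ∫⁻ x, ψ x ∂(μ i) := by
    have h2 : (∑' i : {i : I // sgn i = false}, ∫⁻ x, ψ x ∂(μ i))
        = ∑' i : ↥({i : I | sgn i = true}ᶜ), ∫⁻ x, ψ x ∂(μ i) :=
      tsum_subtype_congr (fun i => by simp) fun i => ∫⁻ x, ψ x ∂(μ i)
    rw [h2]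
    exact Summable.tsum_add_tsum_compl (f := fun i => ∫⁻ x, ψ x ∂(μ i)) (s := {i : I | sgn i = true})
      ENNReal.summable ENNReal.summable
  have hiff : ((∑' i : I, ∫⁻ x, ψ x ∂(μ i)) < ⊤) ↔
      ((∀ i, (∫⁻ x, ψ x ∂(μ i)) < ⊤) ∧ Summable fun i => (∫⁻ x, ψ x ∂(μ i)).toReal) := by
    constructor
    · intro h
      exact ⟨fun i => lt_of_le_of_lt (ENNReal.le_tsum i) h, ENNReal.summable_toReal h.ne⟩
    · rintro ⟨hfin, hsum⟩
      have h1 : (∑' i : I, ∫⁻ x, ψ x ∂(μ i))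
          = ∑' i : I, (((∫⁻ x, ψ x ∂(μ i)).toNNReal : ℝ≥0∞)) :=
        tsum_congr fun i => (ENNReal.coe_toNNReal (hfin i).ne).symm
      rw [h1, lt_top_iff_ne_top, ENNReal.tsum_coe_ne_top_iff_summable]
      exact NNReal.summable_coe.mp hsum
  constructor
  · rw [hpos, hneg, ← hiff, ← hsplit]
    exact ENNReal.add_lt_top.symm
  · rintro ⟨hfin, hsum⟩
    set h : I → ℝ := fun i => (if sgn i then (1 : ℝ) else -1) * (∫⁻ x, ψ x ∂(μ i)).toReal
      with hhdef
    have habs : ∀ i, |h i| = (∫⁻ x, ψ x ∂(μ i)).toReal := by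
      intro i
      rcases Bool.eq_false_or_eq_true (sgn i) with hb | hb <;>
        simp [hhdef, hb, abs_of_nonneg ENNReal.toReal_nonneg]
    have hsumh : Summable h := by
      rw [← summable_abs_iff]
      simpa only [habs] using hsum
    have hT : (∑' i : {i : I // sgn i = true}, h i)
        = ∑' i : {i : I // sgn i = true}, (∫⁻ x, ψ x ∂(μ i)).toReal :=
      tsum_congr fun ⟨i, hi⟩ => by simp [hhdef, hi]
    have hF : (∑' i : {i : I // sgn i = false}, h i)
        = -∑' i : {i : I // sgn i = false}, (∫⁻ x, ψ x ∂(μ i)).toReal := by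
      rw [← tsum_neg]
      exact tsum_congr fun ⟨i, hi⟩ => by simp [hhdef, hi]
    have hsplitR : (∑' i : {i : I // sgn i = true}, h i) + (∑' i : {i : I // sgn i = false}, h i)
        = ∑' i : I, h i := by
      have h2 : (∑' i : {i : I // sgn i = false}, h i)
          = ∑' i : ↥({i : I | sgn i = true}ᶜ), h i :=
        tsum_subtype_congr (fun i => by simp) h
      rw [h2]
      exact Summable.tsum_add_tsum_compl (f := h) (s := {i : I | sgn i = true})
        (hsumh.subtype _) (hsumh.subtype _)
    have hpr : (∑' i : {i : I // sgn i = true}, ∫⁻ x, ψ x ∂(μ i)).toReal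
        = ∑' i : {i : I // sgn i = true}, (∫⁻ x, ψ x ∂(μ i)).toReal :=
      ENNReal.tsum_toReal_eq fun i => (hfin i).ne
    have hnr : (∑' i : {i : I // sgn i = false}, ∫⁻ x, ψ x ∂(μ i)).toReal
        = ∑' i : {i : I // sgn i = false}, (∫⁻ x, ψ x ∂(μ i)).toReal :=
      ENNReal.tsum_toReal_eq fun i => (hfin i).ne
    rw [hpos, hneg, hpr, hnr, ← hsplitR, hT, hF]
    ring
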